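/- Corollary 1 (small-bandwidth quadratic roll-off). Let N ≥ 1 be an integer and β a nonzero real constant. Define G(ε) = N + 2·Σ_{m=1}^{N−1} (N − m) · sinc(π·β·m·ε) for ε > 0 (so that (K/N)·G(ε) is the average received SNR over bandwidth ε from Theorem 1). Then there exist constants C > 0 and ε₀ > 0 such that for all 0 < ε ≤ ε₀, | G(ε) − N²·[ 1 − (1/36)·(π·β·ε)²·(N−1)·(N+1) ] | ≤ C·ε⁴. In particular, the average SNR of phase-controlled beamforming satisfies SNR_avg(ε) = K·N·[1 − (1/36)·(π·β·ε)²·(N−1)·(N+1)] + O(ε⁴) as ε → 0⁺. -/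

import Mathlib

open Real Finset

/-- Unnormalized sinc function: `sinc x = sin x / x` for `x ≠ 0`, `sinc 0 = 1`. -/
noncomputable def sinc (x : ℝ) : ℝ := if x = 0 then 1 else Real.sin x / x

private lemma sin_ge_aux : ∀ x : ℝ, 0 ≤ x → x - x ^ 3 / 6 ≤ Real.sin x := by
  have hmono : Monotone (fun x : ℝ => Real.sin x - (x - x ^ 3 / 6)) := by
    apply monotone_of_hasDerivAt_nonneg (f' := fun x => Real.cos x - (1 - x ^ 2 / 2))
    · intro x
      have h1 : HasDerivAt (fun x : ℝ => x - x ^ 3 / 6) (1 - 3 * x ^ 2 / 6) x := by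
        simpa using (hasDerivAt_id x).fun_sub ((hasDerivAt_pow 3 x).div_const 6)
      have := (Real.hasDerivAt_sin x).fun_sub h1
      refine this.congr_deriv ?_
      ring
    · intro x
      simpa [sub_nonneg] using Real.one_sub_sq_div_two_le_cos (x := x)
  intro x hx
  have := hmono hx
  simpa [sub_nonneg] using this

private lemma cos_le_aux : ∀ x : ℝ, 0 ≤ x → Real.cos x ≤ 1 - x ^ 2 / 2 + x ^ 4 / 24 := by
  have hmono : MonotoneOn (fun x : ℝ => (1 - x ^ 2 / 2 + x ^ 4 / 24) - Real.cos x)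
      (Set.Ici (0 : ℝ)) := by
    apply monotoneOn_of_hasDerivWithinAt_nonneg (convex_Ici 0)
      (f' := fun x => (x ^ 3 / 6 - x) + Real.sin x)
    · fun_prop
    · intro x hx
      have h1 : HasDerivAt (fun x : ℝ => (1 - x ^ 2 / 2 + x ^ 4 / 24) - Real.cos x)
          ((x ^ 3 / 6 - x) + Real.sin x) x := by
        have h2 : HasDerivAt (fun x : ℝ => 1 - x ^ 2 / 2 + x ^ 4 / 24)
            (0 - 2 * x / 2 + 4 * x ^ 3 / 24) x := by
          simpa using (((hasDerivAt_const x (1:ℝ)).fun_sub ((hasDerivAt_pow 2 x).div_const 2)).fun_add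
            ((hasDerivAt_pow 4 x).div_const 24))
        have := h2.fun_sub (Real.hasDerivAt_cos x)
        refine this.congr_deriv ?_
        ring
      exact h1.hasDerivWithinAt
    · intro x hx
      rw [interior_Ici] at hx
      have := sin_ge_aux x (le_of_lt hx)
      nlinarith [this]
  intro x hx
  have := hmono (Set.self_mem_Ici) hx hx
  simp only [Real.cos_zero] at this
  nlinarith [this]

private lemma sin_le_aux : ∀ x : ℝ, 0 ≤ x →
    Real.sin x ≤ x - x ^ 3 / 6 + x ^ 5 / 120 := by
  have hmono : MonotoneOn (fun x : ℝ => (x - x ^ 3 / 6 + x ^ 5 / 120) - Real.sin x)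
      (Set.Ici (0 : ℝ)) := by
    apply monotoneOn_of_hasDerivWithinAt_nonneg (convex_Ici 0)
      (f' := fun x => (1 - x ^ 2 / 2 + x ^ 4 / 24) - Real.cos x)
    · fun_prop
    · intro x hx
      have h2 : HasDerivAt (fun x : ℝ => x - x ^ 3 / 6 + x ^ 5 / 120)
          (1 - 3 * x ^ 2 / 6 + 5 * x ^ 4 / 120) x := by
        simpa using ((hasDerivAt_id x).fun_sub ((hasDerivAt_pow 3 x).div_const 6)).fun_add
          ((hasDerivAt_pow 5 x).div_const 120)
      have h1 := h2.sub (Real.hasDerivAt_sin x)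
      have h3 : (1 - 3 * x ^ 2 / 6 + 5 * x ^ 4 / 120) - Real.cos x
          = (1 - x ^ 2 / 2 + x ^ 4 / 24) - Real.cos x := by ring
      rw [h3] at h1
      exact h1.hasDerivWithinAt
    · intro x hx
      rw [interior_Ici] at hx
      have := cos_le_aux x (le_of_lt hx)
      linarith
  intro x hx
  have := hmono (Set.self_mem_Ici) hx hx
  simp only [Real.sin_zero] at this
  nlinarith [this]

private lemma sinc_even (x : ℝ) : _root_.sinc (-x) = _root_.sinc x := by
  unfold _root_.sinc
  rcases eq_or_ne x 0 with h | h
  · simp [h]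
  · rw [if_neg (neg_ne_zero.mpr h), if_neg h, Real.sin_neg, neg_div_neg_eq]

private lemma sinc_bound (x : ℝ) : |_root_.sinc x - (1 - x ^ 2 / 6)| ≤ x ^ 4 / 120 := by
  -- reduce to x ≥ 0
  wlog hx : 0 ≤ x with H
  · have := H (-x) (by linarith [le_of_not_ge hx])
    rw [show ((-x):ℝ) ^ 4 = x ^ 4 by ring, show ((-x):ℝ) ^ 2 = x ^ 2 by ring, sinc_even] at this
    exact this
  rcases eq_or_lt_of_le hx with h0 | h0
  · simp [_root_.sinc, ← h0]
  · have hne : x ≠ 0 := ne_of_gt h0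
    have hlo := sin_ge_aux x hx
    have hhi := sin_le_aux x hx
    rw [abs_le]
    have hs : _root_.sinc x = Real.sin x / x := by simp [_root_.sinc, hne]
    have hlo' : 1 - x ^ 2 / 6 ≤ Real.sin x / x := by
      rw [le_div_iff₀ h0]; nlinarith
    have hhi' : Real.sin x / x ≤ 1 - x ^ 2 / 6 + x ^ 4 / 120 := by
      rw [div_le_iff₀ h0]; nlinarith
    constructor
    · rw [hs]; nlinarith [pow_pos h0 4]
    · rw [hs]; linarith

/-- Small-bandwidth quadratic roll-off of the averaged beamforming gain
`G(ε) = N + 2·Σ_{m=1}^{N−1} (N − m)·sinc(π·β·m·ε)`: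
`G(ε) = N²·[1 − (1/36)·(πβε)²·(N−1)·(N+1)] + O(ε⁴)` as `ε → 0⁺`. -/
theorem avg_snr_small_bandwidth_quadratic_rolloff
    (N : ℕ) (hN : 1 ≤ N) (β : ℝ) (hβ : β ≠ 0) :
    ∃ C > 0, ∃ ε₀ > 0, ∀ ε : ℝ, 0 < ε → ε ≤ ε₀ →
      |((N : ℝ) + 2 * ∑ m ∈ Finset.Icc 1 (N - 1), ((N : ℝ) - m) * _root_.sinc (π * β * m * ε))
        - (N : ℝ) ^ 2 * (1 - (1 / 36) * (π * β * ε) ^ 2 * ((N : ℝ) - 1) * ((N : ℝ) + 1))|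
      ≤ C * ε ^ 4 := by
  have hNpos : 0 < N := hN
  refine ⟨2 * (N : ℝ) ^ 2 * (π * |β| * N) ^ 4 / 120 + 1, by positivity, 1, one_pos, ?_⟩
  intro ε hε hε1
  -- sum identities over range
  have l1 : ∀ n : ℕ, ∑ m ∈ Finset.range n, (m : ℝ) = n * (n - 1) / 2 := by
    intro n
    induction n with
    | zero => simp
    | succ k ih => rw [Finset.sum_range_succ, ih]; push_cast; ring
  have l2 : ∀ n : ℕ, ∑ m ∈ Finset.range n, (m : ℝ) ^ 2 = n * (n - 1) * (2 * n - 1) / 6 := by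
    intro n
    induction n with
    | zero => simp
    | succ k ih => rw [Finset.sum_range_succ, ih]; push_cast; ring
  have l3 : ∀ n : ℕ, ∑ m ∈ Finset.range n, (m : ℝ) ^ 3 = ((n : ℝ) * (n - 1) / 2) ^ 2 := by
    intro n
    induction n with
    | zero => simp
    | succ k ih => rw [Finset.sum_range_succ, ih]; push_cast; ring
  -- convert Icc to range
  have hIcc : Finset.Icc 1 (N - 1) = Finset.Ico 1 N := by
    ext m; simp only [Finset.mem_Icc, Finset.mem_Ico]; omega
  have hsplit : ∀ f : ℕ → ℝ,
      ∑ m ∈ Finset.Icc 1 (N - 1), f m = ∑ m ∈ Finset.range N, f m - f 0 := by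
    intro f
    rw [hIcc, Finset.range_eq_Ico, Finset.sum_eq_sum_Ico_succ_bot hNpos]
    ring
  -- the Taylor-polynomial part of the sum equals the target exactly
  have hsum2 : ∑ m ∈ Finset.range N, ((N : ℝ) - m) * (1 - (π * β * m * ε) ^ 2 / 6)
      = (N : ℝ) * N - (N : ℝ) * (N - 1) / 2
        - (π * β * ε) ^ 2 / 6 *
          ((N : ℝ) * ((N : ℝ) * (N - 1) * (2 * N - 1) / 6) - ((N : ℝ) * (N - 1) / 2) ^ 2) := by
    have h1 : ∀ m ∈ Finset.range N, ((N : ℝ) - m) * (1 - (π * β * m * ε) ^ 2 / 6)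
        = ((N : ℝ) - (m : ℝ) - ((π * β * ε) ^ 2 / 6 * (N : ℝ)) * (m : ℝ) ^ 2)
          + (π * β * ε) ^ 2 / 6 * (m : ℝ) ^ 3 := by
      intro m _; ring
    rw [Finset.sum_congr rfl h1, Finset.sum_add_distrib, Finset.sum_sub_distrib,
      Finset.sum_sub_distrib, Finset.sum_const, Finset.card_range, ← Finset.mul_sum,
      ← Finset.mul_sum, l1, l2, l3]
    ring
  have ha : (N : ℝ) + 2 * ∑ m ∈ Finset.Icc 1 (N - 1),
        ((N : ℝ) - m) * (1 - (π * β * m * ε) ^ 2 / 6)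
      = (N : ℝ) ^ 2 * (1 - (1 / 36) * (π * β * ε) ^ 2 * ((N : ℝ) - 1) * ((N : ℝ) + 1)) := by
    rw [hsplit (fun m => ((N : ℝ) - m) * (1 - (π * β * m * ε) ^ 2 / 6)), hsum2]
    push_cast
    ring
  -- decompose the sinc sum
  have hdecomp : ∑ m ∈ Finset.Icc 1 (N - 1), ((N : ℝ) - m) * _root_.sinc (π * β * m * ε)
      = ∑ m ∈ Finset.Icc 1 (N - 1), ((N : ℝ) - m) * (1 - (π * β * m * ε) ^ 2 / 6)
        + ∑ m ∈ Finset.Icc 1 (N - 1),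
            ((N : ℝ) - m) * (_root_.sinc (π * β * m * ε) - (1 - (π * β * m * ε) ^ 2 / 6)) := by
    rw [← Finset.sum_add_distrib]
    exact Finset.sum_congr rfl fun m _ => by ring
  rw [hdecomp]
  have hrw : ((N : ℝ) + 2 * (∑ m ∈ Finset.Icc 1 (N - 1),
        ((N : ℝ) - m) * (1 - (π * β * m * ε) ^ 2 / 6)
        + ∑ m ∈ Finset.Icc 1 (N - 1),
            ((N : ℝ) - m) * (_root_.sinc (π * β * m * ε) - (1 - (π * β * m * ε) ^ 2 / 6))))
        - (N : ℝ) ^ 2 * (1 - (1 / 36) * (π * β * ε) ^ 2 * ((N : ℝ) - 1) * ((N : ℝ) + 1))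
      = 2 * ∑ m ∈ Finset.Icc 1 (N - 1),
          ((N : ℝ) - m) * (_root_.sinc (π * β * m * ε) - (1 - (π * β * m * ε) ^ 2 / 6)) := by
    linarith [ha]
  rw [hrw]
  -- bound each term
  have hterm : ∀ m ∈ Finset.Icc 1 (N - 1),
      |((N : ℝ) - m) * (_root_.sinc (π * β * m * ε) - (1 - (π * β * m * ε) ^ 2 / 6))|
        ≤ (N : ℝ) * ((π * |β| * N) ^ 4 * ε ^ 4 / 120) := by
    intro m hm
    obtain ⟨hm1, hm2⟩ := Finset.mem_Icc.mp hm
    have hmN : (m : ℝ) ≤ (N : ℝ) := by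
      exact_mod_cast le_trans hm2 (Nat.sub_le N 1)
    have hm0 : (1 : ℝ) ≤ (m : ℝ) := by exact_mod_cast hm1
    rw [abs_mul]
    have habs1 : |(N : ℝ) - m| ≤ (N : ℝ) := by
      rw [abs_le]; constructor <;> nlinarith
    have habs2 : |_root_.sinc (π * β * m * ε) - (1 - (π * β * m * ε) ^ 2 / 6)|
        ≤ (π * |β| * N) ^ 4 * ε ^ 4 / 120 := by
      refine le_trans (sinc_bound _) ?_
      have hb4 : |β| ^ 4 = β ^ 4 := by
        rw [show (4 : ℕ) = 2 * 2 from rfl, pow_mul, sq_abs, ← pow_mul]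
      have hm4 : (m : ℝ) ^ 4 ≤ (N : ℝ) ^ 4 := by
        apply pow_le_pow_left₀ (by linarith) hmN
      calc (π * β * m * ε) ^ 4 / 120 = π ^ 4 * β ^ 4 * (m : ℝ) ^ 4 * ε ^ 4 / 120 := by ring
        _ ≤ π ^ 4 * β ^ 4 * (N : ℝ) ^ 4 * ε ^ 4 / 120 := by
            have h := mul_le_mul_of_nonneg_right
              (mul_le_mul_of_nonneg_left hm4 (by positivity : (0:ℝ) ≤ π ^ 4 * β ^ 4))
              (by positivity : (0:ℝ) ≤ ε ^ 4)
            linarith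
        _ = (π * |β| * N) ^ 4 * ε ^ 4 / 120 := by rw [mul_pow, mul_pow, hb4]
    exact mul_le_mul habs1 habs2 (abs_nonneg _) (by positivity)
  have hcard : (Finset.Icc 1 (N - 1)).card ≤ N := by
    rw [hIcc, Nat.card_Ico]
    omega
  have hsumbound : |∑ m ∈ Finset.Icc 1 (N - 1),
        ((N : ℝ) - m) * (_root_.sinc (π * β * m * ε) - (1 - (π * β * m * ε) ^ 2 / 6))|
      ≤ (N : ℝ) * ((N : ℝ) * ((π * |β| * N) ^ 4 * ε ^ 4 / 120)) := by
    refine le_trans (Finset.abs_sum_le_sum_abs _ _) ?_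
    refine le_trans (Finset.sum_le_sum hterm) ?_
    rw [Finset.sum_const, nsmul_eq_mul]
    have : ((Finset.Icc 1 (N - 1)).card : ℝ) ≤ (N : ℝ) := by exact_mod_cast hcard
    have hpos : (0 : ℝ) ≤ (N : ℝ) * ((π * |β| * N) ^ 4 * ε ^ 4 / 120) := by positivity
    nlinarith
  rw [abs_mul, abs_two]
  have hε4 : (0 : ℝ) < ε ^ 4 := by positivity
  have hK : (0 : ℝ) ≤ (π * |β| * N) ^ 4 := by positivity
  nlinarith [hsumbound]
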